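/- Let f(x) = Hx + c, let U ∈ ℝ^{2n×2k} be symplectic with left inverse U† = J_k^{-1}U^T J_n, let F = U†HU, and suppose x − x₋ ∈ Range(U). Then the projected explicit exponential midpoint step x₊ = x + U e^{hF} U†(x₋ − x) + 2h U φ(hF) U† f(x) satisfies ½(x₊ + x) = x̂ + h U φ(hF) U†(H x̂ + c), where x̂ = ½(x + x₋); i.e., the averages propagate by the projected exponential Euler method. -/

import Mathlib

open Matrix

noncomputable def Jmat (n : ℕ) : Matrix (Fin n ⊕ Fin n) (Fin n ⊕ Fin n) ℝ :=
  Matrix.fromBlocks 0 1 (-1) 0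

attribute [local instance] Matrix.linftyOpNormedRing Matrix.linftyOpNormedAlgebra

noncomputable def expM {m : Type*} [Fintype m] [DecidableEq m] (A : Matrix m m ℝ) : Matrix m m ℝ :=
  NormedSpace.exp A

/-- `phiM A = ∫₀¹ e^{sA} ds`, the matrix version of `φ(z) = (e^z-1)/z`. -/
noncomputable def phiM {m : Type*} [Fintype m] [DecidableEq m] (A : Matrix m m ℝ) : Matrix m m ℝ :=
  ∫ s in (0:ℝ)..1, NormedSpace.exp (s • A)

/-! The averages `x̂ = ½(x + x₋)` feel only the projected dynamics: since `x₋ - x = U η` and `U†U = I`, the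
exponential term `U e^{hF} U† (x₋ - x) = U e^{hF} η` splits, by `e^{hF} = I + φ(hF) hF`, into
`x₋ - x` plus `h U φ(hF) U† H (x₋ - x)`, which is exactly the correction needed to move the
argument of `f` from `x` to `x̂`. -/

section Exponential

variable {m : Type*} [Fintype m] [DecidableEq m]

/-- The fundamental theorem of calculus for `s ↦ e^{sA}` on `[0, 1]`. -/
lemma phiM_mul_self (A : Matrix m m ℝ) : phiM A * A = expM A - 1 := by
  have hcont : Continuous fun s : ℝ => NormedSpace.exp (s • A) :=
    NormedSpace.exp_continuous.comp (continuous_id.smul continuous_const)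
  have hderiv : ∀ s ∈ Set.uIcc (0:ℝ) 1, HasDerivAt (fun u : ℝ => NormedSpace.exp (u • A))
      (NormedSpace.exp (s • A) * A) s := fun s _ => hasDerivAt_exp_smul_const A s
  have hftc := intervalIntegral.integral_eq_sub_of_hasDerivAt hderiv
    ((hcont.mul continuous_const).intervalIntegrable 0 1)
  have hmulRight := ContinuousLinearMap.intervalIntegral_comp_comm
    (LinearMap.toContinuousLinearMap (LinearMap.mulRight ℝ A)) (μ := MeasureTheory.volume)
    (hcont.intervalIntegrable 0 1)
  erw [LinearMap.coe_toContinuousLinearMap'] at hmulRight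
  simp only [LinearMap.mulRight_apply] at hmulRight
  rw [phiM, expM, ← hmulRight, hftc, one_smul, zero_smul, NormedSpace.exp_zero]

lemma expM_mulVec (A : Matrix m m ℝ) (v : m → ℝ) :
    expM A *ᵥ v = v + phiM A *ᵥ (A *ᵥ v) := by
  rw [mulVec_mulVec, phiM_mul_self, sub_mulVec, one_mulVec, add_sub_cancel]

end Exponential

lemma Jmat_mul_self (n : ℕ) : Jmat n * Jmat n = -1 := by
  simp [Jmat, fromBlocks_multiply, ← fromBlocks_one, fromBlocks_neg]

lemma Jmat_inv (n : ℕ) : (Jmat n)⁻¹ = -Jmat n :=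
  inv_eq_right_inv (by rw [mul_neg, Jmat_mul_self, neg_neg])

lemma symplecticLeftInverse_mul_eq_one {n k : ℕ} {U : Matrix (Fin n ⊕ Fin n) (Fin k ⊕ Fin k) ℝ}
    (hU : Uᵀ * Jmat n * U = Jmat k) : (Jmat k)⁻¹ * Uᵀ * Jmat n * U = 1 := by
  rw [Matrix.mul_assoc, Matrix.mul_assoc, ← Matrix.mul_assoc Uᵀ, hU, Jmat_inv, neg_mul,
    Jmat_mul_self, neg_neg]

theorem average_projectedExpMidpoint {ι κ : Type*} [Fintype ι] [Fintype κ] [DecidableEq κ]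
    (H : Matrix ι ι ℝ) (c : ι → ℝ) (U : Matrix ι κ ℝ) (Udag : Matrix κ ι ℝ)
    (hUdag : Udag * U = 1) (h : ℝ) (x xm : ι → ℝ) (ζ : κ → ℝ) (hζ : x - xm = U *ᵥ ζ) :
    (1/2 : ℝ) • (x + U *ᵥ (expM (h • (Udag * H * U)) *ᵥ (Udag *ᵥ (xm - x)))
        + (2 * h) • U *ᵥ (phiM (h • (Udag * H * U)) *ᵥ (Udag *ᵥ (H *ᵥ x + c))) + x)
      = (1/2 : ℝ) • (x + xm)
        + h • U *ᵥ (phiM (h • (Udag * H * U)) *ᵥ (Udag *ᵥ (H *ᵥ ((1/2 : ℝ) • (x + xm)) + c))) := by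
  have hd : xm - x = U *ᵥ (-ζ) := by rw [mulVec_neg, ← hζ, neg_sub]
  have hproj : Udag *ᵥ (xm - x) = -ζ := by rw [hd, mulVec_mulVec, hUdag, one_mulVec]
  have hgen : (h • (Udag * H * U)) *ᵥ (-ζ) = h • Udag *ᵥ (H *ᵥ (xm - x)) := by
    rw [smul_mulVec, hd, mulVec_mulVec, mulVec_mulVec, Matrix.mul_assoc]
  rw [hproj, expM_mulVec, hgen]
  simp only [mulVec_add, mulVec_smul, mulVec_sub, smul_add, smul_sub]
  linear_combination (norm := module) (1/2 : ℝ) • hd.symm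

theorem stmt13 (n k : ℕ) (H : Matrix (Fin n ⊕ Fin n) (Fin n ⊕ Fin n) ℝ)
    (c : (Fin n ⊕ Fin n) → ℝ)
    (f : ((Fin n ⊕ Fin n) → ℝ) → ((Fin n ⊕ Fin n) → ℝ))
    (hf : ∀ x, f x = H.mulVec x + c)
    (U : Matrix (Fin n ⊕ Fin n) (Fin k ⊕ Fin k) ℝ) (hU : Uᵀ * Jmat n * U = Jmat k)
    (Udag : Matrix (Fin k ⊕ Fin k) (Fin n ⊕ Fin n) ℝ) (hUdag : Udag = (Jmat k)⁻¹ * Uᵀ * Jmat n)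
    (F : Matrix (Fin k ⊕ Fin k) (Fin k ⊕ Fin k) ℝ) (hF : F = Udag * H * U)
    (h : ℝ) (x xm xp : (Fin n ⊕ Fin n) → ℝ)
    (hrange : ∃ ζ, x - xm = U.mulVec ζ)
    (hxp : xp = x + U.mulVec ((expM (h • F)).mulVec (Udag.mulVec (xm - x)))
      + (2 * h) • U.mulVec ((phiM (h • F)).mulVec (Udag.mulVec (f x)))) :
    (1/2 : ℝ) • (xp + x)
      = (1/2 : ℝ) • (x + xm)
        + h • U.mulVec ((phiM (h • F)).mulVec
            (Udag.mulVec (H.mulVec ((1/2 : ℝ) • (x + xm)) + c))) := by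
  obtain ⟨ζ, hζ⟩ := hrange
  have hleft : Udag * U = 1 := hUdag ▸ symplecticLeftInverse_mul_eq_one hU
  subst hxp hF
  rw [hf]
  exact average_projectedExpMidpoint H c U Udag hleft h x xm ζ hζ
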